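/- Let C ≥ 2 and let ℓ : Δ^{C−1} → ℝ^C be a proper loss such that ℓ ∘ Π^{-1} is differentiable on the interior of Δ̃^{C−1}, with ℓ_{−C} the vector of the first C−1 partial losses and ℓ_C the last partial loss, and let L̲̃(p̃) = L(Π^{-1}(p̃), Π^{-1}(p̃)) be the projected conditional Bayes risk. Then the canonical link ψ̃(p̃) = −∇L̲̃(p̃) satisfies, for every p̃ in the interior of Δ̃^{C−1}, ψ̃(p̃) = ((ℓ_C ∘ Π^{-1})(p̃)) · 1_{C−1} − (ℓ_{−C} ∘ Π^{-1})(p̃). -/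

import Mathlib

noncomputable section

/-- The probability simplex `Δ^C ⊆ ℝ^{d+1}` (here `C = d+1`). -/
def simplex (n : ℕ) : Set (Fin n → ℝ) :=
  {p | (∀ i, 0 ≤ p i) ∧ ∑ i, p i = 1}

/-- The interior of the projected probability simplex `Δ̃^{C-1} ⊆ ℝ^{C-1}` (here `C-1 = d`). -/
def projInterior (d : ℕ) : Set (Fin d → ℝ) :=
  {p | (∀ i, 0 < p i) ∧ ∑ i, p i < 1}

/-- The inverse projection `Π⁻¹ : Δ̃^{C-1} → Δ^{C-1}`,
`p̃ ↦ (p̃₁, …, p̃_{C-1}, 1 - ∑ i, p̃ i)`. -/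
def piInv (d : ℕ) (p : Fin d → ℝ) : Fin (d + 1) → ℝ :=
  Fin.snoc p (1 - ∑ i, p i)

/-- The conditional risk `L(p,q) = ∑ i, p i * ℓ_i(q)` of a loss `ℓ`. -/
def condRisk {n : ℕ} (ℓ : (Fin n → ℝ) → (Fin n → ℝ)) (p q : Fin n → ℝ) : ℝ :=
  ∑ i, p i * ℓ q i

/-- A loss is proper if `L(p,p) ≤ L(p,q)` on the simplex. -/
def Proper {n : ℕ} (ℓ : (Fin n → ℝ) → (Fin n → ℝ)) : Prop :=
  ∀ p ∈ simplex n, ∀ q ∈ simplex n, condRisk ℓ p p ≤ condRisk ℓ p q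

/-- The composition `ℓ ∘ Π⁻¹ : ℝ^{C-1} → ℝ^C`. -/
def lossComp (d : ℕ) (ℓ : (Fin (d + 1) → ℝ) → (Fin (d + 1) → ℝ)) :
    (Fin d → ℝ) → (Fin (d + 1) → ℝ) :=
  fun x => ℓ (piInv d x)

/-- The projected conditional Bayes risk `L̲̃(p̃) = L(Π⁻¹ p̃, Π⁻¹ p̃)`. -/
def projBayes (d : ℕ) (ℓ : (Fin (d + 1) → ℝ) → (Fin (d + 1) → ℝ)) :
    (Fin d → ℝ) → ℝ :=
  fun x => condRisk ℓ (piInv d x) (piInv d x)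

/-- The gradient `∇L̲̃` of the projected conditional Bayes risk. -/
def gradPB (d : ℕ) (ℓ : (Fin (d + 1) → ℝ) → (Fin (d + 1) → ℝ)) :
    (Fin d → ℝ) → (Fin d → ℝ) :=
  fun x i => fderiv ℝ (projBayes d ℓ) x (Pi.single i 1)

/-- The Hessian `H_{L̲̃}(x) i j = ∂_j ∂_i L̲̃ (x)` of the projected conditional Bayes risk. -/
def hessPB (d : ℕ) (ℓ : (Fin (d + 1) → ℝ) → (Fin (d + 1) → ℝ))
    (x : Fin d → ℝ) (i j : Fin d) : ℝ :=
  fderiv ℝ (gradPB d ℓ) x (Pi.single j 1) i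

/-- The canonical link `ψ̃ = -∇L̲̃`. -/
def canLink (d : ℕ) (ℓ : (Fin (d + 1) → ℝ) → (Fin (d + 1) → ℝ)) :
    (Fin d → ℝ) → (Fin d → ℝ) :=
  fun x i => -(gradPB d ℓ x i)

end

/-! Properness makes `q ↦ L(p, q)` minimal at `q = p`, so in
`L̲̃(x) = ∑ k, (Π⁻¹ x)_k ℓ_k(Π⁻¹ x)` the part of the product rule that differentiates `ℓ`
vanishes at `x = p̃` (an envelope argument). What remains pairs `ℓ(Π⁻¹ p̃)` with the derivative
of the affine map `Π⁻¹`, whose `i`-th partial is `e_i - e_C`, giving `∂_i L̲̃ = ℓ_i - ℓ_C`. -/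

open ContinuousLinearMap

theorem hasFDerivAt_sum_mul_of_isLocalMin {E ι : Type*} [NormedAddCommGroup E]
    [NormedSpace ℝ E] [Fintype ι] {a b : E → ι → ℝ} {a' b' : E →L[ℝ] ι → ℝ} {x : E}
    (ha : HasFDerivAt a a' x) (hb : HasFDerivAt b b' x)
    (hmin : IsLocalMin (fun y => ∑ k, a x k * b y k) x) :
    HasFDerivAt (fun y => ∑ k, a y k * b y k) (∑ k, b x k • (proj k).comp a') x := by
  have hb_zero : ∑ k, a x k • (proj k).comp b' = 0 :=
    hmin.hasFDerivAt_eq_zero <|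
      HasFDerivAt.fun_sum fun k _ => (hasFDerivAt_pi'.1 hb k).const_mul (a x k)
  have hprod := HasFDerivAt.fun_sum (u := Finset.univ) fun k _ =>
    (hasFDerivAt_pi'.1 ha k).fun_mul (hasFDerivAt_pi'.1 hb k)
  simpa only [Finset.sum_add_distrib, hb_zero, zero_add] using hprod

theorem isOpen_projInterior (d : ℕ) : IsOpen (projInterior d) := by
  have hset : projInterior d =
      (⋂ i, (fun p : Fin d → ℝ => p i) ⁻¹' Set.Ioi 0) ∩ (fun p => ∑ i, p i) ⁻¹' Set.Iio 1 := by
    ext p; simp [projInterior]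
  rw [hset]
  exact (isOpen_iInter_of_finite fun i => isOpen_Ioi.preimage (continuous_apply i)).inter
    (isOpen_Iio.preimage (continuous_finsetSum _ fun i _ => continuous_apply i))

theorem piInv_mem_simplex {d : ℕ} {x : Fin d → ℝ} (hx : x ∈ projInterior d) :
    piInv d x ∈ simplex (d + 1) := by
  refine ⟨fun k => ?_, by simp [piInv, Fin.sum_univ_castSucc]⟩
  induction k using Fin.lastCases with
  | last => simpa [piInv] using hx.2.le
  | cast j => simpa [piInv] using (hx.1 j).le

def piInvDeriv (d : ℕ) : (Fin d → ℝ) →L[ℝ] Fin (d + 1) → ℝ :=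
  pi (Fin.snoc (proj ·) (-∑ i, proj i))

theorem piInvDeriv_apply (d : ℕ) (v : Fin d → ℝ) : piInvDeriv d v = Fin.snoc v (-∑ i, v i) := by
  ext k
  induction k using Fin.lastCases <;> simp [piInvDeriv]

theorem hasFDerivAt_piInv (d : ℕ) (x : Fin d → ℝ) : HasFDerivAt (piInv d) (piInvDeriv d) x := by
  have haffine : piInv d = fun x => piInv d 0 + piInvDeriv d x := by
    funext x; ext k
    induction k using Fin.lastCases <;> simp [piInv, piInvDeriv_apply, sub_eq_add_neg]
  rw [haffine]
  exact (piInvDeriv d).hasFDerivAt.const_add _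

theorem sum_mul_piInvDeriv_single {d : ℕ} (c : Fin (d + 1) → ℝ) (i : Fin d) :
    ∑ k, c k * piInvDeriv d (Pi.single i 1) k = c i.castSucc - c (Fin.last d) := by
  simp [piInvDeriv_apply, Fin.sum_univ_castSucc, Pi.single_apply, sub_eq_add_neg]

theorem isLocalMin_condRisk_piInv {d : ℕ} {ℓ : (Fin (d + 1) → ℝ) → (Fin (d + 1) → ℝ)}
    (hproper : Proper ℓ) {pt : Fin d → ℝ} (hpt : pt ∈ projInterior d) :
    IsLocalMin (fun x => condRisk ℓ (piInv d pt) (piInv d x)) pt :=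
  Filter.mem_of_superset ((isOpen_projInterior d).mem_nhds hpt) fun _ hx =>
    hproper _ (piInv_mem_simplex hpt) _ (piInv_mem_simplex hx)

theorem hasFDerivAt_projBayes {d : ℕ} {ℓ : (Fin (d + 1) → ℝ) → (Fin (d + 1) → ℝ)}
    (hproper : Proper ℓ) {pt : Fin d → ℝ} (hpt : pt ∈ projInterior d)
    (hdiff : DifferentiableAt ℝ (lossComp d ℓ) pt) :
    HasFDerivAt (projBayes d ℓ)
      (∑ k, lossComp d ℓ pt k • (proj k).comp (piInvDeriv d)) pt :=
  hasFDerivAt_sum_mul_of_isLocalMin (hasFDerivAt_piInv d pt) hdiff.hasFDerivAt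
    (isLocalMin_condRisk_piInv hproper hpt)

theorem stmt_7_general (d : ℕ)
    (ℓ : (Fin (d + 1) → ℝ) → (Fin (d + 1) → ℝ)) (hproper : Proper ℓ)
    (hdiff : ∀ pt ∈ projInterior d, DifferentiableAt ℝ (lossComp d ℓ) pt) :
    ∀ pt ∈ projInterior d,
      DifferentiableAt ℝ (projBayes d ℓ) pt ∧
      ∀ i : Fin d,
        canLink d ℓ pt i = ℓ (piInv d pt) (Fin.last d) - ℓ (piInv d pt) i.castSucc := by
  intro pt hpt
  have hderiv := hasFDerivAt_projBayes hproper hpt (hdiff pt hpt)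
  refine ⟨hderiv.differentiableAt, fun i => ?_⟩
  have hgrad : gradPB d ℓ pt i = ℓ (piInv d pt) i.castSucc - ℓ (piInv d pt) (Fin.last d) := by
    simp only [gradPB, hderiv.fderiv, sum_apply, smul_apply, coe_comp, Function.comp_apply,
      proj_apply, smul_eq_mul]
    exact sum_mul_piInvDeriv_single (lossComp d ℓ pt) i
  rw [canLink, hgrad, neg_sub]

/-- For a proper loss with `ℓ ∘ Π⁻¹` differentiable on the interior of the projected
simplex, the canonical link `ψ̃ = -∇L̲̃` satisfies
`ψ̃(pt) = ((ℓ_C ∘ Π⁻¹)(pt)) · 1_{C-1} - (ℓ₋C ∘ Π⁻¹)(pt)`. -/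
theorem stmt_7 (d : ℕ) (hd : 1 ≤ d)
    (ℓ : (Fin (d + 1) → ℝ) → (Fin (d + 1) → ℝ)) (hproper : Proper ℓ)
    (hdiff : ∀ pt ∈ projInterior d, DifferentiableAt ℝ (lossComp d ℓ) pt) :
    ∀ pt ∈ projInterior d,
      DifferentiableAt ℝ (projBayes d ℓ) pt ∧
      ∀ i : Fin d,
        canLink d ℓ pt i = ℓ (piInv d pt) (Fin.last d) - ℓ (piInv d pt) i.castSucc :=
  stmt_7_general d ℓ hproper hdiff
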